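/- The Hermitian polynomial $q(x_1,x_2,x_4,\alpha) = \mathbf{W}(x_1,x_2,-6,x_4,1,\alpha)$ is a sum of squares: with monomial vector $m = (\alpha, x_1, x_2, x_4, \bar\alpha x_1, \bar\alpha x_4)$ and the explicit real symmetric matrices $A, B$ given below, the block matrix $\begin{pmatrix} A & B \\ B & A \end{pmatrix}$ is positive semidefinite and $q = \begin{pmatrix} m \\ \bar m\end{pmatrix}^\dagger \begin{pmatrix} A & B \\ B & A \end{pmatrix} \begin{pmatrix} m \\ \bar m \end{pmatrix}$. -/

import Mathlib

open Matrix Complex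

/-- The Ha–Kye positive map `Φ : M₂(ℂ) → M₄(ℂ)`. -/
def haKye (M : Matrix (Fin 2) (Fin 2) ℂ) : Matrix (Fin 4) (Fin 4) ℂ :=
  let x := M 0 0; let y := M 0 1; let z := M 1 0; let w := M 1 1
  !![3*w + 4*x - 2*y - 2*z, 2*z - 2*x, 0, 0;
     2*y - 2*x, 2*x, z, 0;
     0, y, 2*w, -w - 2*z;
     0, 0, -w - 2*y, 2*w + 4*x]

/-- The Hermitian polynomial `W(x,y) = x† Φ(y y†) x` associated to the Ha–Kye map. -/
noncomputable def W (x : Fin 4 → ℂ) (y : Fin 2 → ℂ) : ℂ :=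
  dotProduct (star x) ((haKye (vecMulVec y (star y))).mulVec x)

/-- The matrix `A` of the explicit sum-of-squares certificate. -/
noncomputable def matA : Matrix (Fin 6) (Fin 6) ℝ :=
  !![36, 0, -3, 0, 0, 0;
     0, 2, -1, 0, -1, 0;
     -3, -1, 1, 0, 1, 0;
     0, 0, 0, 2, 0, 0;
     0, -1, 1, 0, 3/2, 0;
     0, 0, 0, 0, 0, 1]

/-- The matrix `B` of the explicit sum-of-squares certificate. -/
noncomputable def matB : Matrix (Fin 6) (Fin 6) ℝ :=
  !![0, 0, 0, 6, 0, 3;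
     0, 0, 0, 0, 0, -1;
     0, 0, 0, 0, 0, 0;
     6, 0, 0, 0, 1, 0;
     0, 0, 0, 1, 0, 0;
     3, -1, 0, 0, 0, 0]


noncomputable def L11 : Matrix (Fin 6) (Fin 6) ℝ :=
  !![1,0,0,0,0,0; 0,1,0,0,0,0; -1/12,-1/2,1,0,0,0; 0,0,0,1,0,0; 0,-1/2,2,0,1,0; 0,0,0,0,0,1]
noncomputable def L21 : Matrix (Fin 6) (Fin 6) ℝ :=
  !![0,0,0,3,0,3; 0,0,0,0,0,-1; 0,0,0,0,0,0; 1/6,0,2,0,0,0; 0,0,0,1/2,0,0; 1/12,-1/2,-1,0,0,0]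
noncomputable def L22 : Matrix (Fin 6) (Fin 6) ℝ :=
  !![1,0,0,0,0,0; 1/3,1,0,0,0,0; -1/3,0,1,0,0,0; 0,0,0,1,0,0; -1/3,0,0,0,1,0; 0,0,0,0,0,1]
noncomputable def d1 : Fin 6 → ℝ := ![36,2,1/4,2,0,1]
noncomputable def d2 : Fin 6 → ℝ := ![9,0,0,0,0,0]

set_option maxHeartbeats 1000000 in
theorem k11 : L11 * Matrix.diagonal d1 * L11ᴴ = matA := by
  ext i j
  rw [Matrix.mul_apply]
  fin_cases i <;> fin_cases j <;>
    norm_num [L11, d1, matA, Matrix.mul_diagonal, Fin.sum_univ_succ, Matrix.conjTranspose_apply]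

set_option maxHeartbeats 1000000 in
theorem k12 : L11 * Matrix.diagonal d1 * L21ᴴ = matB := by
  ext i j
  rw [Matrix.mul_apply]
  fin_cases i <;> fin_cases j <;>
    norm_num [L11, L21, d1, matB, Matrix.mul_diagonal, Fin.sum_univ_succ,
      Matrix.conjTranspose_apply]

set_option maxHeartbeats 1000000 in
theorem k21 : L21 * Matrix.diagonal d1 * L11ᴴ = matB := by
  ext i j
  rw [Matrix.mul_apply]
  fin_cases i <;> fin_cases j <;>
    norm_num [L11, L21, d1, matB, Matrix.mul_diagonal, Fin.sum_univ_succ,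
      Matrix.conjTranspose_apply]

set_option maxHeartbeats 1000000 in
theorem k22 : L21 * Matrix.diagonal d1 * L21ᴴ + L22 * Matrix.diagonal d2 * L22ᴴ = matA := by
  ext i j
  rw [Matrix.add_apply, Matrix.mul_apply, Matrix.mul_apply]
  fin_cases i <;> fin_cases j <;>
    norm_num [L21, L22, d1, d2, matA, Matrix.mul_diagonal, Fin.sum_univ_succ,
      Matrix.conjTranspose_apply]

theorem key : Matrix.fromBlocks matA matB matB matA =
    Matrix.fromBlocks L11 0 L21 L22 * Matrix.diagonal (Sum.elim d1 d2) *
      (Matrix.fromBlocks L11 0 L21 L22)ᴴ := by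
  rw [← Matrix.fromBlocks_diagonal, Matrix.fromBlocks_conjTranspose,
    Matrix.fromBlocks_multiply, Matrix.fromBlocks_multiply]
  simp only [Matrix.mul_zero, Matrix.zero_mul, add_zero, zero_add, Matrix.conjTranspose_zero]
  rw [k11, k12, k21, k22]

theorem psd : (Matrix.fromBlocks matA matB matB matA).PosSemidef := by
  rw [key]
  refine (Matrix.posSemidef_diagonal_iff.mpr ?_).mul_mul_conjTranspose_same _
  rintro (i | i) <;> fin_cases i <;> norm_num [d1, d2]

set_option maxHeartbeats 2000000 in
/-- The dehomogenization `q(x₁,x₂,x₄,α) = W(x₁,x₂,−6,x₄,1,α)` is a sum of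
squares: the block matrix `[[A, B], [B, A]]` is positive semidefinite and, with the monomial
vector `m = (α, x₁, x₂, x₄, ᾱx₁, ᾱx₄)`, we have `q = (m; m̄)† [[A,B],[B,A]] (m; m̄)`. -/
theorem stmt_12 :
    (Matrix.fromBlocks matA matB matB matA).PosSemidef ∧
    ∀ (x₁ x₂ x₄ α : ℂ),
      W ![x₁, x₂, -6, x₄] ![1, α] =
        dotProduct
          (star (Sum.elim (![α, x₁, x₂, x₄, starRingEnd ℂ α * x₁, starRingEnd ℂ α * x₄])
            (fun i => starRingEnd ℂ (![α, x₁, x₂, x₄, starRingEnd ℂ α * x₁,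
              starRingEnd ℂ α * x₄] i))))
          (((Matrix.fromBlocks matA matB matB matA).map (fun r : ℝ => (r : ℂ))).mulVec
            (Sum.elim (![α, x₁, x₂, x₄, starRingEnd ℂ α * x₁, starRingEnd ℂ α * x₄])
              (fun i => starRingEnd ℂ (![α, x₁, x₂, x₄, starRingEnd ℂ α * x₁,
                starRingEnd ℂ α * x₄] i)))) := by
  constructor
  · exact psd
  · intro x₁ x₂ x₄ α
    simp only [W, haKye, vecMulVec, dotProduct, Matrix.mulVec, Matrix.map_apply,
      Matrix.fromBlocks, matA, matB, Fintype.sum_sum_type, Fin.sum_univ_succ, Fin.sum_univ_zero,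
      Sum.elim_inl, Sum.elim_inr, Pi.star_apply, Matrix.of_apply, Matrix.cons_val',
      Matrix.cons_val_zero, Matrix.cons_val_succ, Matrix.cons_val_one, Matrix.head_cons,
      Matrix.head_fin_const, Matrix.empty_val', Matrix.cons_val_fin_one, RCLike.star_def,
      _root_.map_mul, Complex.conj_conj, _root_.map_one, _root_.map_ofNat, _root_.map_neg,
      Matrix.vecHead, Matrix.vecTail, Function.comp, Pi.zero_apply]
    push_cast
    ring
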